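/- Let a₊, a₋ ∈ (0,2)\{1}, let C₊, C₋, λ₊, λ₋, μ₊, μ₋ > 0 and T > 0. Define r : ℝ → ℝ by r(x) = exp(−(λ₊−μ₊)x²/2) for x > 0 and r(x) = exp(−(λ₋−μ₋)x²/2) for x < 0, and let ℓ̃ be the RDTS Lévy density with parameters (a₊, a₋, C₊, C₋, μ₊, μ₋). Then T·∫_ℝ (r(x)·log r(x) − r(x) + 1)·ℓ̃(x) dx = 2^{−1−a₊/2}·T·C₊·Γ(−a₊/2)·( (a₊/2 − 1)·λ₊^{a₊/2} − (a₊/2)·μ₊·λ₊^{a₊/2−1} + μ₊^{a₊/2} ) + 2^{−1−a₋/2}·T·C₋·Γ(−a₋/2)·( (a₋/2 − 1)·λ₋^{a₋/2} − (a₋/2)·μ₋·λ₋^{a₋/2−1} + μ₋^{a₋/2} ). -/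

import Mathlib

open MeasureTheory Real Set

/-- The RDTS (rapidly-decreasing tempered stable) Lévy density with parameters
`(a₊, a₋, C₊, C₋, θ₊, θ₋)`. -/
noncomputable def rdtsDensity (ap am Cp Cm tp tm : ℝ) (x : ℝ) : ℝ :=
  if 0 < x then Cp * exp (-(tp * x ^ 2 / 2)) * x ^ (-ap - 1)
  else if x < 0 then Cm * exp (-(tm * x ^ 2 / 2)) * |x| ^ (-am - 1)
  else 0

/-
On `x > 0` we have `r = e^{-(λ-μ)x²/2}`, so `r log r = -(λ-μ) x² r / 2` and `r ℓ̃` is the RDTS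
density tempered by `λ` instead of `μ`. Hence `(r log r - r + 1) ℓ̃` is the Gamma-type term
`-(λ-μ) C x^{1-a} e^{-λx²/2} / 2` plus `C (e^{-μx²/2} - 1) x^{-a-1} - C (e^{-λx²/2} - 1) x^{-a-1}`,
where subtracting `1` makes `x^{-a-1}` integrable at `0`. Integrating by parts against `x^{-a}/a`
turns `∫₀^∞ (e^{-θx²/2} - 1) x^{-a-1} dx` into `-θ/a` times the Gamma integral
`∫₀^∞ x^{1-a} e^{-θx²/2} dx`, and `Γ(1 - a/2) = -(a/2) Γ(-a/2)` gives `2^{-1-a/2} Γ(-a/2) θ^{a/2}`.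
The half-line `x < 0` is the same computation after `x ↦ -x`.
-/

open Filter Topology

lemma abs_exp_neg_sub_one_le {y : ℝ} (hy : 0 ≤ y) : |exp (-y) - 1| ≤ y := by
  rw [abs_sub_comm, abs_of_nonneg (sub_nonneg.2 (exp_le_one_iff.2 (neg_nonpos.2 hy)))]
  linarith [one_sub_le_exp_neg y]

lemma abs_exp_neg_sub_one_le_one {y : ℝ} (hy : 0 ≤ y) : |exp (-y) - 1| ≤ 1 := by
  rw [abs_sub_comm, abs_of_nonneg (sub_nonneg.2 (exp_le_one_iff.2 (neg_nonpos.2 hy)))]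
  linarith [exp_pos (-y)]

lemma integrableOn_exp_neg_mul_sq_sub_one_mul_rpow {a θ : ℝ} (ha0 : 0 < a) (ha2 : a < 2)
    (hθ : 0 ≤ θ) :
    IntegrableOn (fun x : ℝ => (exp (-(θ * x ^ 2 / 2)) - 1) * x ^ (-a - 1)) (Ioi 0) := by
  have hmeas : AEStronglyMeasurable
      (fun x : ℝ => (exp (-(θ * x ^ 2 / 2)) - 1) * x ^ (-a - 1)) := by fun_prop
  rw [← Ioc_union_Ioi_eq_Ioi zero_le_one, integrableOn_union]
  constructor
  · have hdom : IntegrableOn (fun x : ℝ => θ / 2 * x ^ (1 - a)) (Ioc 0 1) :=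
      ((intervalIntegrable_iff_integrableOn_Ioc_of_le zero_le_one).mp
        (intervalIntegral.intervalIntegrable_rpow' (by linarith))).const_mul _
    refine hdom.mono' hmeas.restrict ?_
    filter_upwards [ae_restrict_mem measurableSet_Ioc] with x ⟨hx0, _⟩
    rw [norm_mul, norm_eq_abs, norm_of_nonneg (rpow_nonneg hx0.le _),
      show 1 - a = 2 + (-a - 1) by ring, rpow_add hx0, rpow_two]
    calc _ ≤ θ * x ^ 2 / 2 * x ^ (-a - 1) := by
          gcongr; exact abs_exp_neg_sub_one_le (by positivity)
      _ = _ := by ring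
  · refine (integrableOn_Ioi_rpow_of_lt (by linarith : -a - 1 < -1) zero_lt_one).mono'
      hmeas.restrict ?_
    filter_upwards [ae_restrict_mem measurableSet_Ioi] with x hx
    have hx0 : (0:ℝ) < x := zero_lt_one.trans hx
    rw [norm_mul, norm_eq_abs, norm_of_nonneg (rpow_nonneg hx0.le _)]
    exact mul_le_of_le_one_left (rpow_nonneg hx0.le _) (abs_exp_neg_sub_one_le_one (by positivity))

lemma integral_rpow_one_sub_mul_exp_neg_mul_sq {a θ : ℝ} (ha : a ≠ 0) (ha2 : a < 2)
    (hθ : 0 < θ) :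
    ∫ x in Ioi (0:ℝ), x ^ (1 - a) * exp (-(θ / 2) * x ^ 2)
      = -a * 2 ^ (-1 - a / 2) * Gamma (-(a / 2)) * θ ^ (a / 2 - 1) := by
  have h := integral_rpow_mul_exp_neg_mul_rpow two_pos (by linarith : -1 < 1 - a) (half_pos hθ)
  simp only [rpow_two] at h
  rw [h, show (1 - a + 1) / 2 = -(a / 2) + 1 by ring, show -(1 - a + 1) / 2 = a / 2 - 1 by ring,
    Gamma_add_one (by simpa using ha), div_rpow hθ.le zero_le_two, rpow_sub_one two_ne_zero,
    show -1 - a / 2 = -(a / 2) - 1 by ring, rpow_sub_one two_ne_zero, rpow_neg zero_le_two]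
  field_simp

lemma tendsto_exp_neg_mul_sq_sub_one_mul_rpow_nhdsGT_zero {a θ : ℝ} (ha2 : a < 2)
    (hθ : 0 ≤ θ) :
    Tendsto (fun x : ℝ => (exp (-(θ * x ^ 2 / 2)) - 1) * x ^ (-a)) (𝓝[>] 0) (𝓝 0) := by
  have hlim : Tendsto (fun x : ℝ => θ / 2 * x ^ (2 - a)) (𝓝[>] 0) (𝓝 0) := by
    simpa [zero_rpow (sub_pos.2 ha2).ne'] using
      ((continuousAt_rpow_const 0 (2 - a) (Or.inr (sub_pos.2 ha2).le)).continuousWithinAt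
        (s := Ioi 0)).tendsto.const_mul (θ / 2)
  refine squeeze_zero_norm' ?_ hlim
  filter_upwards [self_mem_nhdsWithin] with x (hx : 0 < x)
  rw [norm_mul, norm_eq_abs, norm_of_nonneg (rpow_nonneg hx.le _),
    show 2 - a = 2 + -a by ring, rpow_add hx, rpow_two]
  calc _ ≤ θ * x ^ 2 / 2 * x ^ (-a) := by
        gcongr; exact abs_exp_neg_sub_one_le (by positivity)
    _ = _ := by ring

lemma tendsto_exp_neg_mul_sq_sub_one_mul_rpow_atTop {a θ : ℝ} (ha0 : 0 < a) (hθ : 0 ≤ θ) :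
    Tendsto (fun x : ℝ => (exp (-(θ * x ^ 2 / 2)) - 1) * x ^ (-a)) atTop (𝓝 0) := by
  refine squeeze_zero_norm' ?_ (tendsto_rpow_neg_atTop ha0)
  filter_upwards [eventually_gt_atTop 0] with x hx
  rw [norm_mul, norm_eq_abs, norm_of_nonneg (rpow_nonneg hx.le _)]
  exact mul_le_of_le_one_left (rpow_nonneg hx.le _) (abs_exp_neg_sub_one_le_one (by positivity))

lemma integral_exp_neg_mul_sq_sub_one_mul_rpow {a θ : ℝ} (ha0 : 0 < a) (ha2 : a < 2)
    (hθ : 0 < θ) :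
    ∫ x in Ioi (0:ℝ), (exp (-(θ * x ^ 2 / 2)) - 1) * x ^ (-a - 1)
      = 2 ^ (-1 - a / 2) * Gamma (-(a / 2)) * θ ^ (a / 2) := by
  have ha : a ≠ 0 := ha0.ne'
  set u : ℝ → ℝ := fun x => exp (-(θ * x ^ 2 / 2)) - 1
  set v : ℝ → ℝ := fun x => -a⁻¹ * x ^ (-a)
  have hu : ∀ x ∈ Ioi (0:ℝ), HasDerivAt u (-(θ * x) * exp (-(θ * x ^ 2 / 2))) x := fun x _ => by
    refine ((((hasDerivAt_pow 2 x).const_mul θ).div_const 2).neg.exp.sub_const 1).congr_deriv ?_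
    push_cast [Pi.neg_apply]
    ring
  have hv : ∀ x ∈ Ioi (0:ℝ), HasDerivAt v (x ^ (-a - 1)) x := fun x hx => by
    refine ((hasDerivAt_rpow_const (p := -a) (Or.inl hx.ne')).const_mul (-a⁻¹)).congr_deriv ?_
    field_simp
  have hu'v : EqOn (fun x => -(θ * x) * exp (-(θ * x ^ 2 / 2)) * v x)
      (fun x => θ / a * (x ^ (1 - a) * exp (-(θ / 2) * x ^ 2))) (Ioi 0) := fun x (hx : 0 < x) => by
    simp only [v, show 1 - a = 1 + -a by ring, rpow_add hx, rpow_one,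
      show -(θ / 2) * x ^ 2 = -(θ * x ^ 2 / 2) by ring]
    field_simp
  have huv : u * v = fun x => -a⁻¹ * ((exp (-(θ * x ^ 2 / 2)) - 1) * x ^ (-a)) := by
    ext x
    simp only [u, v, Pi.mul_apply]
    ring
  have hibp := integral_Ioi_mul_deriv_eq_deriv_mul hu hv
    (integrableOn_exp_neg_mul_sq_sub_one_mul_rpow ha0 ha2 hθ.le)
    (IntegrableOn.congr_fun
      ((integrableOn_rpow_mul_exp_neg_mul_sq (half_pos hθ) (by linarith)).const_mul (θ / a))
      hu'v.symm measurableSet_Ioi)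
    (by simpa [huv] using
      (tendsto_exp_neg_mul_sq_sub_one_mul_rpow_nhdsGT_zero ha2 hθ.le).const_mul (-a⁻¹))
    (by simpa [huv] using
      (tendsto_exp_neg_mul_sq_sub_one_mul_rpow_atTop ha0 hθ.le).const_mul (-a⁻¹))
  rw [hibp, setIntegral_congr_fun measurableSet_Ioi hu'v, integral_const_mul,
    integral_rpow_one_sub_mul_exp_neg_mul_sq ha ha2 hθ, rpow_sub_one hθ.ne' (a / 2)]
  field_simp
  ring

lemma integral_eq_integral_Ioi_add_integral_Ioi_comp_neg {E : Type*} [NormedAddCommGroup E]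
    [NormedSpace ℝ E] {F : ℝ → E} (hpos : IntegrableOn F (Ioi 0))
    (hneg : IntegrableOn (fun x => F (-x)) (Ioi 0)) :
    ∫ x, F x = (∫ x in Ioi 0, F x) + ∫ x in Ioi 0, F (-x) := by
  have hIic : IntegrableOn F (Iic 0) := by
    rw [← (Measure.measurePreserving_neg (volume : Measure ℝ)).integrableOn_comp_preimage
        (Homeomorph.neg ℝ).measurableEmbedding, neg_preimage, neg_Iic, neg_zero,
      integrableOn_Ici_iff_integrableOn_Ioi]
    exact hneg
  have hF : Integrable F := by
    rw [← integrableOn_univ, ← Iic_union_Ioi (a := (0:ℝ))]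
    exact hIic.union hpos
  rw [← integral_add_compl measurableSet_Iic hF, compl_Iic, integral_comp_neg_Ioi, neg_zero,
    add_comm]

namespace RDTS

noncomputable def tailKLIntegrand (a C l m x : ℝ) : ℝ :=
  (exp (-((l - m) * x ^ 2 / 2)) * log (exp (-((l - m) * x ^ 2 / 2)))
    - exp (-((l - m) * x ^ 2 / 2)) + 1) * (C * exp (-(m * x ^ 2 / 2)) * x ^ (-a - 1))

lemma tailKLIntegrand_eq {a C l m x : ℝ} (hx : 0 < x) :
    tailKLIntegrand a C l m x
      = -((l - m) / 2 * C) * (x ^ (1 - a) * exp (-(l / 2) * x ^ 2))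
        - C * ((exp (-(l * x ^ 2 / 2)) - 1) * x ^ (-a - 1))
        + C * ((exp (-(m * x ^ 2 / 2)) - 1) * x ^ (-a - 1)) := by
  have hexp (s : ℝ) (hs : s = -(l * x ^ 2 / 2)) :
      exp s = exp (-((l - m) * x ^ 2 / 2)) * exp (-(m * x ^ 2 / 2)) := by
    rw [← exp_add, hs]; ring_nf
  rw [tailKLIntegrand, log_exp, hexp _ rfl, hexp (-(l / 2) * x ^ 2) (by ring),
    show 1 - a = 2 + (-a - 1) by ring, rpow_add hx, rpow_two]
  ring

lemma integrableOn_tailKLIntegrand {a C l m : ℝ} (ha0 : 0 < a) (ha2 : a < 2) (hl : 0 < l)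
    (hm : 0 ≤ m) : IntegrableOn (tailKLIntegrand a C l m) (Ioi 0) :=
  IntegrableOn.congr_fun
    ((((integrableOn_rpow_mul_exp_neg_mul_sq (half_pos hl) (by linarith)).const_mul _).sub
      ((integrableOn_exp_neg_mul_sq_sub_one_mul_rpow ha0 ha2 hl.le).const_mul C)).add
      ((integrableOn_exp_neg_mul_sq_sub_one_mul_rpow ha0 ha2 hm).const_mul C))
    (fun _ hx => (tailKLIntegrand_eq hx).symm) measurableSet_Ioi

lemma integral_tailKLIntegrand {a C l m : ℝ} (ha0 : 0 < a) (ha2 : a < 2) (hl : 0 < l)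
    (hm : 0 < m) :
    ∫ x in Ioi (0:ℝ), tailKLIntegrand a C l m x
      = 2 ^ (-1 - a / 2) * C * Gamma (-(a / 2)) *
          ((a / 2 - 1) * l ^ (a / 2) - a / 2 * m * l ^ (a / 2 - 1) + m ^ (a / 2)) := by
  have hH := integrableOn_rpow_mul_exp_neg_mul_sq (half_pos hl) (by linarith : -1 < 1 - a)
  have hGl := integrableOn_exp_neg_mul_sq_sub_one_mul_rpow ha0 ha2 hl.le
  have hGm := integrableOn_exp_neg_mul_sq_sub_one_mul_rpow ha0 ha2 hm.le
  rw [setIntegral_congr_fun measurableSet_Ioi fun x hx => tailKLIntegrand_eq hx,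
    integral_add ?_ (hGm.const_mul _),
    integral_sub (hH.const_mul _) (hGl.const_mul _), integral_const_mul, integral_const_mul,
    integral_const_mul, integral_rpow_one_sub_mul_exp_neg_mul_sq ha0.ne' ha2 hl,
    integral_exp_neg_mul_sq_sub_one_mul_rpow ha0 ha2 hl,
    integral_exp_neg_mul_sq_sub_one_mul_rpow ha0 ha2 hm,
    rpow_sub_one hl.ne' (a / 2)]
  · field_simp
    ring
  · exact (hH.const_mul _).sub (hGl.const_mul C)

end RDTS

theorem rdts_kl_divergence_general (ap am Cp Cm lp lm mp mm T : ℝ)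
    (hap : ap ∈ Ioo (0:ℝ) 2)
    (ham : am ∈ Ioo (0:ℝ) 2)
    (hlp : 0 < lp) (hlm : 0 < lm)
    (hmp : 0 < mp) (hmm : 0 < mm)
    (r : ℝ → ℝ)
    (hrp : ∀ x : ℝ, 0 < x → r x = exp (-((lp - mp) * x ^ 2 / 2)))
    (hrm : ∀ x : ℝ, x < 0 → r x = exp (-((lm - mm) * x ^ 2 / 2))) :
    T * ∫ x : ℝ, (r x * Real.log (r x) - r x + 1) * rdtsDensity ap am Cp Cm mp mm x
      = (2:ℝ) ^ (-1 - ap / 2) * T * Cp * Gamma (-(ap / 2)) *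
          ((ap / 2 - 1) * lp ^ (ap / 2) - (ap / 2) * mp * lp ^ (ap / 2 - 1) + mp ^ (ap / 2))
        + (2:ℝ) ^ (-1 - am / 2) * T * Cm * Gamma (-(am / 2)) *
          ((am / 2 - 1) * lm ^ (am / 2) - (am / 2) * mm * lm ^ (am / 2 - 1) + mm ^ (am / 2)) := by
  set F := fun x => (r x * log (r x) - r x + 1) * rdtsDensity ap am Cp Cm mp mm x
  have hFpos : EqOn F (RDTS.tailKLIntegrand ap Cp lp mp) (Ioi 0) := fun x (hx : 0 < x) => by
    simp only [F, rdtsDensity, if_pos hx, hrp x hx, RDTS.tailKLIntegrand]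
  have hFneg : EqOn (fun x => F (-x)) (RDTS.tailKLIntegrand am Cm lm mm) (Ioi 0) :=
    fun x (hx : 0 < x) => by
      simp only [F, rdtsDensity, if_neg (not_lt.2 (neg_nonpos.2 hx.le)),
        if_pos (neg_neg_of_pos hx), hrm (-x) (neg_neg_of_pos hx), neg_sq, abs_neg,
        abs_of_pos hx, RDTS.tailKLIntegrand]
  rw [integral_eq_integral_Ioi_add_integral_Ioi_comp_neg
      ((RDTS.integrableOn_tailKLIntegrand hap.1 hap.2 hlp hmp.le).congr_fun hFpos.symm
        measurableSet_Ioi)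
      ((RDTS.integrableOn_tailKLIntegrand ham.1 ham.2 hlm hmm.le).congr_fun hFneg.symm
        measurableSet_Ioi),
    setIntegral_congr_fun measurableSet_Ioi hFpos, setIntegral_congr_fun measurableSet_Ioi hFneg,
    RDTS.integral_tailKLIntegrand hap.1 hap.2 hlp hmp,
    RDTS.integral_tailKLIntegrand ham.1 ham.2 hlm hmm]
  ring

/-- Kullback–Leibler divergence between two equivalent-martingale RDTS processes. -/
theorem rdts_kl_divergence (ap am Cp Cm lp lm mp mm T : ℝ)
    (hap : ap ∈ Ioo (0:ℝ) 2) (hap1 : ap ≠ 1)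
    (ham : am ∈ Ioo (0:ℝ) 2) (ham1 : am ≠ 1)
    (hCp : 0 < Cp) (hCm : 0 < Cm) (hlp : 0 < lp) (hlm : 0 < lm)
    (hmp : 0 < mp) (hmm : 0 < mm) (hT : 0 < T)
    (r : ℝ → ℝ)
    (hrp : ∀ x : ℝ, 0 < x → r x = exp (-((lp - mp) * x ^ 2 / 2)))
    (hrm : ∀ x : ℝ, x < 0 → r x = exp (-((lm - mm) * x ^ 2 / 2))) :
    T * ∫ x : ℝ, (r x * Real.log (r x) - r x + 1) * rdtsDensity ap am Cp Cm mp mm x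
      = (2:ℝ) ^ (-1 - ap / 2) * T * Cp * Gamma (-(ap / 2)) *
          ((ap / 2 - 1) * lp ^ (ap / 2) - (ap / 2) * mp * lp ^ (ap / 2 - 1) + mp ^ (ap / 2))
        + (2:ℝ) ^ (-1 - am / 2) * T * Cm * Gamma (-(am / 2)) *
          ((am / 2 - 1) * lm ^ (am / 2) - (am / 2) * mm * lm ^ (am / 2 - 1) + mm ^ (am / 2)) :=
  rdts_kl_divergence_general ap am Cp Cm lp lm mp mm T hap ham hlp hlm hmp hmm r hrp hrm
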